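/- The polynomial p₂(x) = x² − (13/35)x + 493/45360 is orthogonal to 1 and x with respect to the inner product ⟨f,g⟩ = ∫₀¹ f(x)g(x)(−log x)³ dx. -/

import Mathlib

/-!
The substitution `x = exp (-t)` turns `∫₀¹ xⁿ (-log x)ᵏ dx` into the Gamma integral
`∫₀^∞ tᵏ exp (-(n + 1) t) dt = k! / (n + 1)^(k + 1)`. For `k = 3` the two orthogonality relations
then reduce to rational identities between the moments `6 / (n + 1)⁴`.
-/

open Real MeasureTheory Set Nat

lemma image_exp_neg_Ioi_zero : (fun t : ℝ => exp (-t)) '' Ioi 0 = Ioo 0 1 := by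
  ext x
  constructor
  · rintro ⟨t, ht, rfl⟩
    exact ⟨exp_pos _, exp_lt_one_iff.2 (neg_lt_zero.2 ht)⟩
  · rintro ⟨hx₀, hx₁⟩
    exact ⟨-log x, neg_pos.2 (log_neg hx₀ hx₁), by simp [exp_log hx₀]⟩

section ExpNegSubstitution

variable {E : Type*} [NormedAddCommGroup E] [NormedSpace ℝ E]

lemma injOn_exp_neg (s : Set ℝ) : InjOn (fun t => exp (-t)) s :=
  fun _ _ _ _ h => neg_injective (exp_injective h)

lemma hasDerivWithinAt_exp_neg (s : Set ℝ) (t : ℝ) :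
    HasDerivWithinAt (fun t => exp (-t)) (-exp (-t)) s t := by
  simpa using ((hasDerivAt_neg t).exp).hasDerivWithinAt

lemma integrableOn_Ioo_zero_one_iff_exp_neg (g : ℝ → E) :
    IntegrableOn g (Ioo 0 1) ↔ IntegrableOn (fun t => exp (-t) • g (exp (-t))) (Ioi 0) := by
  rw [← image_exp_neg_Ioi_zero, integrableOn_image_iff_integrableOn_abs_deriv_smul
    measurableSet_Ioi (fun t _ => hasDerivWithinAt_exp_neg _ t) (injOn_exp_neg _)]
  simp [abs_of_pos (exp_pos _)]

lemma integral_Ioo_zero_one_eq_integral_exp_neg (g : ℝ → E) :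
    ∫ x in Ioo 0 1, g x = ∫ t in Ioi 0, exp (-t) • g (exp (-t)) := by
  rw [← image_exp_neg_Ioi_zero, integral_image_eq_integral_abs_deriv_smul
    measurableSet_Ioi (fun t _ => hasDerivWithinAt_exp_neg _ t) (injOn_exp_neg _)]
  simp [abs_of_pos (exp_pos _)]

end ExpNegSubstitution

lemma exp_neg_smul_pow_mul_neg_log_pow (n k : ℕ) (t : ℝ) :
    exp (-t) • (exp (-t) ^ n * (-log (exp (-t))) ^ k) = t ^ k * exp (-((n + 1) * t)) := by
  have : exp (-((n + 1) * t)) = exp (-t) * exp (-t) ^ n := by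
    rw [← exp_nat_mul, ← exp_add]; ring_nf
  rw [smul_eq_mul, log_exp, neg_neg, this]
  ring

theorem intervalIntegrable_pow_mul_neg_log_pow (n k : ℕ) :
    IntervalIntegrable (fun x : ℝ => x ^ n * (-log x) ^ k) volume 0 1 := by
  rw [intervalIntegrable_iff_integrableOn_Ioo_of_le zero_le_one,
    integrableOn_Ioo_zero_one_iff_exp_neg]
  simp only [exp_neg_smul_pow_mul_neg_log_pow]
  refine (integrableOn_rpow_mul_exp_neg_mul_rpow (s := k) (p := 1) (b := n + 1)
    (neg_one_lt_zero.trans_le k.cast_nonneg) one_pos (by positivity)).congr_fun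
    (fun t _ => ?_) measurableSet_Ioi
  simp only [rpow_one, rpow_natCast, neg_mul]

theorem integral_pow_mul_neg_log_pow (n k : ℕ) :
    ∫ x in (0 : ℝ)..1, x ^ n * (-log x) ^ k = k ! / (n + 1) ^ (k + 1) := by
  rw [intervalIntegral.integral_of_le zero_le_one, integral_Ioc_eq_integral_Ioo,
    integral_Ioo_zero_one_eq_integral_exp_neg]
  simp only [exp_neg_smul_pow_mul_neg_log_pow]
  have := integral_rpow_mul_exp_neg_mul_Ioi (a := k + 1) (r := n + 1) (by positivity)
    (by positivity)
  simp only [add_sub_cancel_right, rpow_natCast] at this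
  rw [Gamma_nat_eq_factorial, show (k : ℝ) + 1 = (k + 1 : ℕ) by push_cast; rfl,
    rpow_natCast] at this
  rw [this, div_pow, one_pow, one_div_mul_eq_div]

theorem integral_sum_mul_neg_log_pow {ι : Type*} (s : Finset ι) (c : ι → ℝ) (m : ι → ℕ) (k : ℕ) :
    ∫ x in (0 : ℝ)..1, (∑ i ∈ s, c i * x ^ m i) * (-log x) ^ k =
      ∑ i ∈ s, c i * (k ! / (m i + 1) ^ (k + 1)) := by
  simp_rw [Finset.sum_mul, mul_assoc]
  rw [intervalIntegral.integral_finsetSum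
    (fun i _ => (intervalIntegrable_pow_mul_neg_log_pow (m i) k).const_mul (c i))]
  simp_rw [intervalIntegral.integral_const_mul, integral_pow_mul_neg_log_pow]

theorem p2_orthogonal_m3 :
    (∫ x in (0:ℝ)..1, (x ^ 2 - (13/35) * x + 493/45360) * (-Real.log x) ^ 3 = 0) ∧
    (∫ x in (0:ℝ)..1, x * (x ^ 2 - (13/35) * x + 493/45360) * (-Real.log x) ^ 3 = 0) := by
  constructor
  · convert integral_sum_mul_neg_log_pow Finset.univ ![1, -13/35, 493/45360] ![2, 1, 0] 3
      using 1
    · congr 1 with x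
      simp only [Fin.sum_univ_three, Matrix.cons_val]
      ring
    · simp only [Fin.sum_univ_three, Matrix.cons_val]
      norm_num [Nat.factorial]
  · convert integral_sum_mul_neg_log_pow Finset.univ ![1, -13/35, 493/45360] ![3, 2, 1] 3
      using 1
    · congr 1 with x
      simp only [Fin.sum_univ_three, Matrix.cons_val]
      ring
    · simp only [Fin.sum_univ_three, Matrix.cons_val]
      norm_num [Nat.factorial]
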